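/- arXiv:math/0510458 — 4 statements merged into one kernel-verified Lean document; each statement's English description precedes it below -/
import Mathlib

section
/- With the covering complex Ŝ as above, the simplex-lifting property (C1) holds: for every abstract simplex s = {v_0, …, v_m} ∈ K and every vertex v̂ ∈ (p^0)^{-1}(v_0), there exists a unique abstract simplex ŝ ∈ K̂ containing v̂ with p^0(ŝ) = s. -/
/-- The simplices of the covering complex Ŝ on V̂ = V × (ℤ/2)^r (conditions
(U1) and (U2) of the paper, in the equivalent pairwise form given by the
Remark). -/
def CovK {V : Type} [DecidableEq V] {r : ℕ} (K : Set (Finset V))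
    (J : V → V → (Fin r → ZMod 2)) : Set (Finset (V × (Fin r → ZMod 2))) :=
  {t | t.image Prod.fst ∈ K ∧ ∀ p ∈ t, ∀ q ∈ t, p.2 + q.2 = J p.1 q.1}

/- STATEMENT 5 (property (C1), unique simplex lifting): for every simplex
s ∈ K and every vertex v̂ = (v₀,g₀) in the fibre (p⁰)⁻¹(v₀) over a vertex
v₀ of s, there is a unique simplex ŝ ∈ K̂ containing v̂ with p⁰(ŝ) = s. -/
theorem stmt_5
    (V : Type) [DecidableEq V] (r : ℕ)
    (K : Set (Finset V))
    (hdown : ∀ s ∈ K, ∀ t ⊆ s, t ∈ K)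
    (J : V → V → (Fin r → ZMod 2))
    (hsymm : ∀ a b, J a b = J b a)
    (hdiag : ∀ a, J a a = 0)
    (hcoc : ∀ a b c : V, ({a, b, c} : Finset V) ∈ K → J a b + J b c + J a c = 0) :
    ∀ s ∈ K, ∀ v0 ∈ s, ∀ g0 : Fin r → ZMod 2,
      ∃! t : Finset (V × (Fin r → ZMod 2)),
        t ∈ CovK K J ∧ (v0, g0) ∈ t ∧ t.image Prod.fst = s := by
  intro s hs v0 hv0 g0
  -- the candidate lift
  refine ⟨s.image (fun v => (v, g0 + J v0 v)), ⟨⟨?_, ?_⟩, ?_, ?_⟩, ?_⟩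
  · have : (s.image (fun v => (v, g0 + J v0 v))).image Prod.fst = s := by
      rw [Finset.image_image]; exact Finset.image_id
    rw [this]; exact hs
  · intro p hp q hq
    simp only [Finset.mem_image] at hp hq
    obtain ⟨a, ha, rfl⟩ := hp
    obtain ⟨b, hb, rfl⟩ := hq
    have habc : ({v0, a, b} : Finset V) ∈ K := by
      apply hdown s hs
      intro x hx
      simp only [Finset.mem_insert, Finset.mem_singleton] at hx
      rcases hx with rfl | rfl | rfl <;> assumption
    have h := hcoc v0 a b habc
    have h2 : ∀ x : Fin r → ZMod 2, x + x = 0 := by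
      intro x; funext i; exact CharTwo.add_self_eq_zero (x i)
    have : J v0 a + J v0 b = J a b := by
      have := hcoc v0 a b habc
      rw [hsymm v0 b] at this
      have e : J a b = J a b + (J v0 a + J a b + J b v0) := by rw [this]; abel
      rw [e, hsymm b v0]
      have : J a b + J a b = 0 := h2 _
      abel_nf
      rw [show (2 : ℤ) • J a b = J a b + J a b by rw [two_smul], this]
      abel
    simp only
    calc (g0 + J v0 a) + (g0 + J v0 b) = (g0 + g0) + (J v0 a + J v0 b) := by abel
      _ = J a b := by rw [h2 g0, this, zero_add]
  · refine Finset.mem_image.2 ⟨v0, hv0, ?_⟩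
    rw [hdiag, add_zero]
  · rw [Finset.image_image]; exact Finset.image_id
  · -- uniqueness
    rintro t ⟨⟨-, hpair⟩, hv, himg⟩
    ext ⟨a, g⟩
    simp only [Finset.mem_image]
    constructor
    · intro hmem
      refine ⟨a, ?_, ?_⟩
      · rw [← himg]; exact Finset.mem_image.2 ⟨(a, g), hmem, rfl⟩
      · have := hpair (v0, g0) hv (a, g) hmem
        simp only at this
        have h2 : g0 + g0 = 0 := by funext i; exact CharTwo.add_self_eq_zero (g0 i)
        have : g0 + (g0 + g) = g0 + J v0 a := by rw [this]
        rw [← add_assoc, h2, zero_add] at this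
        rw [this]
    · rintro ⟨b, hb, heq⟩
      cases heq
      rw [← himg] at hb
      obtain ⟨⟨c, h⟩, hc, hc1⟩ := Finset.mem_image.1 hb
      simp only at hc1; subst hc1
      have hpq := hpair (v0, g0) hv (c, h) hc
      simp only at hpq
      have h2 : g0 + g0 = 0 := by funext i; exact CharTwo.add_self_eq_zero (g0 i)
      have hh : h = g0 + J v0 c := by
        have h3 : g0 + (g0 + h) = g0 + J v0 c := by rw [hpq]
        rwa [← add_assoc, h2, zero_add] at h3
      rw [← hh]; exact hc
end

section
/- With the covering complex Ŝ as above, property (C3) holds: for any two simplices ŝ, ŝ' ∈ K̂, p^0(ŝ) = p^0(ŝ') if and only if there exists g ∈ G with g·ŝ = ŝ'. Consequently G acts simply transitively on the fiber of p^0 over each simplex of K. -/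
lemma zmod2_add_self {r : ℕ} (a : Fin r → ZMod 2) : a + a = 0 := by
  funext i
  simp only [Pi.add_apply, Pi.zero_apply]
  generalize a i = x
  revert x; decide

lemma zmod2_eq_of_add_eq_zero {r : ℕ} {a b : Fin r → ZMod 2} (h : a + b = 0) : a = b := by
  have : a + (b + b) = 0 + b := by rw [← add_assoc, h]
  rwa [zmod2_add_self, add_zero, zero_add] at this

/- STATEMENT 7 (property (C3)): for simplices ŝ, ŝ' ∈ K̂ one has
p⁰(ŝ) = p⁰(ŝ') iff ŝ' = g·ŝ for some g ∈ G = (ℤ/2)^r; moreover (simple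
transitivity on fibres) for nonempty ŝ with p⁰(ŝ) = p⁰(ŝ') the element g
is unique. -/
theorem stmt_7
    (V : Type) [DecidableEq V] (r : ℕ)
    (K : Set (Finset V))
    (hdown : ∀ s ∈ K, ∀ t ⊆ s, t ∈ K)
    (J : V → V → (Fin r → ZMod 2))
    (hsymm : ∀ a b, J a b = J b a)
    (hdiag : ∀ a, J a a = 0)
    (hcoc : ∀ a b c : V, ({a, b, c} : Finset V) ∈ K → J a b + J b c + J a c = 0) :
    ∀ t ∈ CovK K J, ∀ t' ∈ CovK K J,
      (t.image Prod.fst = t'.image Prod.fst ↔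
        ∃ g : Fin r → ZMod 2, t.image (fun p => (p.1, g + p.2)) = t') ∧
      (t.Nonempty → t.image Prod.fst = t'.image Prod.fst →
        ∃! g : Fin r → ZMod 2, t.image (fun p => (p.1, g + p.2)) = t') := by
  intro t ht t' ht'
  obtain ⟨-, htJ⟩ := ht
  obtain ⟨-, htJ'⟩ := ht'
  -- in a simplex of CovK, the second coordinate is determined by the first
  have hkey : ∀ (s : Finset (V × (Fin r → ZMod 2))),
      (∀ p ∈ s, ∀ q ∈ s, p.2 + q.2 = J p.1 q.1) →
      ∀ p ∈ s, ∀ q ∈ s, p.1 = q.1 → p = q := by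
    intro s hs p hp q hq hpq
    have h1 := hs p hp q hq
    rw [hpq, hdiag] at h1
    exact Prod.ext hpq (zmod2_eq_of_add_eq_zero h1)
  -- main construction
  have main : t.image Prod.fst = t'.image Prod.fst →
      ∃ g : Fin r → ZMod 2, t.image (fun p => (p.1, g + p.2)) = t' := by
    intro him
    rcases t.eq_empty_or_nonempty with rfl | hne
    · refine ⟨0, ?_⟩
      simp only [Finset.image_empty] at him ⊢
      exact (Finset.image_eq_empty.mp him.symm).symm
    · obtain ⟨p₀, hp₀⟩ := hne
      have ha' : p₀.1 ∈ t'.image Prod.fst := by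
        rw [← him]; exact Finset.mem_image_of_mem _ hp₀
      obtain ⟨q₀, hq₀, hfst₀⟩ := Finset.mem_image.mp ha'
      refine ⟨q₀.2 + p₀.2, ?_⟩
      have hsub : t.image (fun p => (p.1, q₀.2 + p₀.2 + p.2)) ⊆ t' := by
        intro x hx
        obtain ⟨p, hp, rfl⟩ := Finset.mem_image.mp hx
        have hv' : p.1 ∈ t'.image Prod.fst := by
          rw [← him]; exact Finset.mem_image_of_mem _ hp
        obtain ⟨q, hq, hfst⟩ := Finset.mem_image.mp hv'
        have e1 : p.2 + p₀.2 = J p.1 p₀.1 := htJ p hp p₀ hp₀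
        have e2 : q.2 + q₀.2 = J q.1 q₀.1 := htJ' q hq q₀ hq₀
        rw [hfst, hfst₀] at e2
        have e3 : (p.2 + p₀.2) + (q.2 + q₀.2) = 0 := by
          rw [e1, e2, zmod2_add_self]
        have e4 : p.2 + p₀.2 = q.2 + q₀.2 := zmod2_eq_of_add_eq_zero e3
        have e5 : q.2 = q₀.2 + p₀.2 + p.2 := by
          have : q₀.2 + p₀.2 + p.2 + q.2 = 0 := by
            calc q₀.2 + p₀.2 + p.2 + q.2 = (p.2 + p₀.2) + (q.2 + q₀.2) := by abel
              _ = (q.2 + q₀.2) + (q.2 + q₀.2) := by rw [e4]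
              _ = 0 := zmod2_add_self _
          exact (zmod2_eq_of_add_eq_zero this).symm
        have heq : ((p.1, q₀.2 + p₀.2 + p.2) : V × (Fin r → ZMod 2)) = q :=
          Prod.ext hfst.symm e5.symm
        rw [heq]; exact hq
      have hinj : ∀ s : Finset (V × (Fin r → ZMod 2)),
          (∀ p ∈ s, ∀ q ∈ s, p.2 + q.2 = J p.1 q.1) →
          (s.image Prod.fst).card = s.card := by
        intro s hs
        apply Finset.card_image_of_injOn
        intro p hp q hq hpq
        exact hkey s hs p hp q hq hpq
      have hcard : (t.image (fun p => (p.1, q₀.2 + p₀.2 + p.2))).card = t'.card := by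
        have h1 : (t.image (fun p => (p.1, q₀.2 + p₀.2 + p.2))).card = t.card := by
          apply Finset.card_image_of_injective
          intro p q hpq
          rw [Prod.ext_iff] at hpq
          exact Prod.ext hpq.1 (add_left_cancel hpq.2)
        rw [h1, ← hinj t htJ, ← hinj t' htJ', him]
      exact Finset.eq_of_subset_of_card_le hsub (le_of_eq hcard.symm)
  constructor
  · constructor
    · exact main
    · rintro ⟨g, rfl⟩
      rw [Finset.image_image]
      rfl
  · intro ⟨p₀, hp₀⟩ him
    obtain ⟨g, hg⟩ := main him
    refine ⟨g, hg, ?_⟩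
    intro g' hg'
    have h1 : (p₀.1, g + p₀.2) ∈ t' := by
      rw [← hg]; exact Finset.mem_image_of_mem _ hp₀
    have h2 : (p₀.1, g' + p₀.2) ∈ t' := by
      rw [← hg']; exact Finset.mem_image_of_mem _ hp₀
    have h3 := hkey t' htJ' _ h2 _ h1 rfl
    have h4 : g' + p₀.2 = g + p₀.2 := congrArg Prod.snd h3
    exact add_right_cancel h4
end

section
/- Let P be a closed triangulated n-manifold, J an index function relative to a basis of H_{n-1}(P; Z/2), and p : P̂ → P the covering built from J. Then p is a regular covering map whose group of covering transformations is isomorphic to (Z/2)^r ≅ H_1(P; Z/2), acting by g·(v,h) = (v, g+h). -/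
/- STATEMENT 11 (Proposition 2): for a closed triangulated n-manifold P with
index function J relative to a basis of H_{n-1}(P;ℤ/2), the projection
p : P̂ → P of the covering complex is a regular simplicial covering whose
group of covering transformations is G = (ℤ/2)^r ≅ H₁(P;ℤ/2), acting by
g·(v,h) = (v, g+h).  Combinatorially: (C1) unique simplex lifting holds,
(C2) the G-action on nonempty simplices is free, (C3) G is transitive on the
fibres of simplices (regularity), and G is isomorphic to
H₁(P;ℤ/2) = Z₁/B₁.  The hypotheses hvan, hinjJ, hsurjJ encode that the
index function computes intersection indices with a basis of H_{n-1}(P)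
under the perfect mod-2 intersection pairing. -/
theorem stmt_11
    (V : Type) [DecidableEq V] (r : ℕ)
    (K : Set (Finset V))
    (hdown : ∀ s ∈ K, ∀ t ⊆ s, t ∈ K)
    (J : V → V → (Fin r → ZMod 2))
    (hsymm : ∀ a b, J a b = J b a)
    (hdiag : ∀ a, J a a = 0)
    (hcoc : ∀ a b c : V, ({a, b, c} : Finset V) ∈ K → J a b + J b c + J a c = 0)
    (bdry : (Sym2 V →₀ ZMod 2) →ₗ[ZMod 2] (V →₀ ZMod 2))
    (hbdry : ∀ u v : V,
      bdry (Finsupp.single s(u, v) 1) = Finsupp.single u 1 + Finsupp.single v 1)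
    (B1 : Submodule (ZMod 2) (Sym2 V →₀ ZMod 2))
    (hB1 : B1 ≤ LinearMap.ker bdry)
    (Jc : (Sym2 V →₀ ZMod 2) →+ (Fin r → ZMod 2))
    (hJc : ∀ u v : V, Jc (Finsupp.single s(u, v) 1) = J u v)
    (hvan : ∀ b ∈ B1, Jc b = 0)
    (hinjJ : ∀ z ∈ LinearMap.ker bdry, Jc z = 0 → z ∈ B1)
    (hsurjJ : ∀ g : Fin r → ZMod 2, ∃ z ∈ LinearMap.ker bdry, Jc z = g) :
    -- (C1) unique simplex lifting
    (∀ s ∈ K, ∀ v0 ∈ s, ∀ g0 : Fin r → ZMod 2,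
      ∃! t : Finset (V × (Fin r → ZMod 2)),
        t ∈ CovK K J ∧ (v0, g0) ∈ t ∧ t.image Prod.fst = s) ∧
    -- (C2) the action of G on nonempty simplices is free
    (∀ g : Fin r → ZMod 2, ∀ t ∈ CovK K J, t.Nonempty →
      t.image (fun p => (p.1, g + p.2)) = t → g = 0) ∧
    -- (C3) G acts transitively on the fibres over simplices (regularity)
    (∀ t ∈ CovK K J, ∀ t' ∈ CovK K J,
      t.image Prod.fst = t'.image Prod.fst ↔
        ∃ g : Fin r → ZMod 2, t.image (fun p => (p.1, g + p.2)) = t') ∧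
    -- the deck group G = (ℤ/2)^r is isomorphic to H₁(P;ℤ/2)
    Nonempty ((Fin r → ZMod 2) ≃ₗ[ZMod 2]
      (LinearMap.ker bdry ⧸ (Submodule.comap (LinearMap.ker bdry).subtype B1 :
        Submodule (ZMod 2) (LinearMap.ker bdry)))) := by
    classical
  -- char 2 facts
  have h2 : ∀ x : Fin r → ZMod 2, x + x = 0 := by
    intro x; funext i
    exact CharTwo.add_self_eq_zero (x i)
  have hJadd : ∀ a b c : V, ({a, b, c} : Finset V) ∈ K → J a b + J b c = J a c := by
    intro a b c h
    have hc := hcoc a b c h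
    have : (J a b + J b c + J a c) + J a c = 0 + J a c := by rw [hc]
    rwa [add_assoc, h2, add_zero, zero_add] at this
  -- (C1)
  have C1 : ∀ s ∈ K, ∀ v0 ∈ s, ∀ g0 : Fin r → ZMod 2,
      ∃! t : Finset (V × (Fin r → ZMod 2)),
        t ∈ CovK K J ∧ (v0, g0) ∈ t ∧ t.image Prod.fst = s := by
    intro s hs v0 hv0 g0
    set f : V → V × (Fin r → ZMod 2) := fun v => (v, g0 + J v0 v) with hf
    refine ⟨s.image f, ⟨?_, ?_, ?_⟩, ?_⟩
    · constructor
      · rw [Finset.image_image]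
        have : (Prod.fst ∘ f) = id := by funext v; rfl
        rw [this, Finset.image_id]; exact hs
      · intro p hp q hq
        rcases Finset.mem_image.1 hp with ⟨u, hu, rfl⟩
        rcases Finset.mem_image.1 hq with ⟨w, hw, rfl⟩
        show (g0 + J v0 u) + (g0 + J v0 w) = J u w
        have hK : ({u, v0, w} : Finset V) ∈ K := by
          refine hdown s hs _ ?_
          intro x hx
          simp only [Finset.mem_insert, Finset.mem_singleton] at hx
          rcases hx with rfl | rfl | rfl <;> assumption
        calc (g0 + J v0 u) + (g0 + J v0 w)
            = (g0 + g0) + (J v0 u + J v0 w) := by ring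
          _ = J u v0 + J v0 w := by rw [h2, zero_add, hsymm]
          _ = J u w := hJadd u v0 w hK
    · refine Finset.mem_image.2 ⟨v0, hv0, ?_⟩
      simp [hf, hdiag]
    · rw [Finset.image_image]
      have : (Prod.fst ∘ f) = id := by funext v; rfl
      rw [this, Finset.image_id]
    · rintro t' ⟨⟨ht'K, ht'pw⟩, hmem, himg⟩
      have key : ∀ p ∈ t', p = f p.1 := by
        intro p hp
        have := ht'pw (v0, g0) hmem p hp
        have hp2 : p.2 = g0 + J v0 p.1 := by
          have h' : g0 + (g0 + p.2) = g0 + J v0 p.1 := by rw [this]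
          rwa [← add_assoc, h2, zero_add] at h'
        cases p; simp only at hp2; simp [hf, hp2]
      apply Finset.ext
      intro p
      constructor
      · intro hp
        have hp1 : p.1 ∈ s := by
          rw [← himg]; exact Finset.mem_image_of_mem _ hp
        rw [key p hp]; exact Finset.mem_image_of_mem _ hp1
      · intro hp
        rcases Finset.mem_image.1 hp with ⟨v, hv, rfl⟩
        have : v ∈ t'.image Prod.fst := by rw [himg]; exact hv
        rcases Finset.mem_image.1 this with ⟨q, hq, hq1⟩
        have := key q hq
        rw [this, hq1] at hq
        exact hq
  -- (C2)
  have C2 : ∀ g : Fin r → ZMod 2, ∀ t ∈ CovK K J, t.Nonempty →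
      t.image (fun p => (p.1, g + p.2)) = t → g = 0 := by
    rintro g t ⟨htK, htpw⟩ ⟨p, hp⟩ heq
    have hp' : (p.1, g + p.2) ∈ t := by
      rw [← heq]; exact Finset.mem_image_of_mem _ hp
    have := htpw (p.1, g + p.2) hp' p hp
    simp only [hdiag] at this
    have h' : (g + p.2) + p.2 = g := by rw [add_assoc, h2, add_zero]
    rw [h'] at this; exact this
  -- (C3)
  have C3 : ∀ t ∈ CovK K J, ∀ t' ∈ CovK K J,
      t.image Prod.fst = t'.image Prod.fst ↔
        ∃ g : Fin r → ZMod 2, t.image (fun p => (p.1, g + p.2)) = t' := by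
    intro t ht t' ht'
    constructor
    · intro himg
      rcases Finset.eq_empty_or_nonempty t with rfl | ⟨p0, hp0⟩
      · refine ⟨0, ?_⟩
        have : t'.image Prod.fst = ∅ := by rw [← himg]; simp
        rw [Finset.image_empty]
        exact (Finset.image_eq_empty.1 this).symm
      · obtain ⟨htK, htpw⟩ := ht
        obtain ⟨ht'K, ht'pw⟩ := ht'
        have hp0' : p0.1 ∈ t'.image Prod.fst := by
          rw [← himg]; exact Finset.mem_image_of_mem _ hp0
        rcases Finset.mem_image.1 hp0' with ⟨q0, hq0, hq01⟩
        refine ⟨p0.2 + q0.2, ?_⟩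
        set s := t.image Prod.fst with hsdef
        have hs : s ∈ K := htK
        have hp01s : p0.1 ∈ s := Finset.mem_image_of_mem _ hp0
        obtain ⟨u, hu, huniq⟩ := C1 s hs p0.1 hp01s q0.2
        -- the translate of t qualifies
        have htrans : (t.image (fun p => (p.1, p0.2 + q0.2 + p.2)) ∈ CovK K J ∧
            (p0.1, q0.2) ∈ t.image (fun p => (p.1, p0.2 + q0.2 + p.2)) ∧
            (t.image (fun p => (p.1, p0.2 + q0.2 + p.2))).image Prod.fst = s) := by
          refine ⟨⟨?_, ?_⟩, ?_, ?_⟩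
          · rw [Finset.image_image]
            exact htK
          · intro p hp q hq
            rcases Finset.mem_image.1 hp with ⟨a, ha, rfl⟩
            rcases Finset.mem_image.1 hq with ⟨b, hb, rfl⟩
            show (p0.2 + q0.2 + a.2) + (p0.2 + q0.2 + b.2) = J a.1 b.1
            have := htpw a ha b hb
            calc (p0.2 + q0.2 + a.2) + (p0.2 + q0.2 + b.2)
                = ((p0.2 + q0.2) + (p0.2 + q0.2)) + (a.2 + b.2) := by ring
              _ = a.2 + b.2 := by rw [h2, zero_add]
              _ = J a.1 b.1 := this
          · refine Finset.mem_image.2 ⟨p0, hp0, ?_⟩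
            have : p0.2 + q0.2 + p0.2 = q0.2 := by
              calc p0.2 + q0.2 + p0.2 = (p0.2 + p0.2) + q0.2 := by ring
                _ = q0.2 := by rw [h2, zero_add]
            rw [this]
          · rw [Finset.image_image]; rfl
        have ht'q : t' ∈ CovK K J ∧ (p0.1, q0.2) ∈ t' ∧ t'.image Prod.fst = s := by
          refine ⟨⟨ht'K, ht'pw⟩, ?_, himg.symm⟩
          have : q0 = (p0.1, q0.2) := by
            cases q0; simp only at hq01; simp [hq01]
          rwa [this] at hq0
        rw [huniq _ htrans, huniq _ ht'q]
    · rintro ⟨g, rfl⟩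
      rw [Finset.image_image]
      rfl
  refine ⟨C1, C2, C3, ?_⟩
  -- (C4): the deck group is H₁
  have hsmul : ∀ (c : ZMod 2) (x : Sym2 V →₀ ZMod 2), Jc (c • x) = c • Jc x := by
    intro c x
    have hc : c = 0 ∨ c = 1 := by revert c; decide
    rcases hc with rfl | rfl
    · simp
    · simp
  set φ : (LinearMap.ker bdry) →ₗ[ZMod 2] (Fin r → ZMod 2) :=
    { toFun := fun z => Jc z.1
      map_add' := fun a b => Jc.map_add _ _
      map_smul' := fun c z => hsmul c z.1 } with hφ
  have hsurj : Function.Surjective φ := by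
    intro g
    obtain ⟨z, hz, hzg⟩ := hsurjJ g
    exact ⟨⟨z, hz⟩, hzg⟩
  have hker : LinearMap.ker φ =
      Submodule.comap (LinearMap.ker bdry).subtype B1 := by
    ext z
    simp only [LinearMap.mem_ker, Submodule.mem_comap, Submodule.subtype_apply]
    constructor
    · intro h; exact hinjJ z.1 z.2 h
    · intro h; exact hvan z.1 h
  exact ⟨((LinearMap.quotKerEquivOfSurjective φ hsurj).symm.trans
    (Submodule.quotEquivOfEq _ _ hker))⟩
end

section
/- Let S = (V, K) be a connected simplicial complex, G = (Z/2)^r, and J a G-valued edge labelling satisfying the triangle cocycle condition, and let Ŝ be the covering complex on V × G defined by (U1),(U2). Then the connected component of Ŝ containing (v_0, 0) surjects onto S under p^0 if and only if S is connected; and two vertices (v, g), (v, g') lie in the same component iff g + g' lies in the subgroup of G generated by the values J(z) over all edge loops z of S based at v. -/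
/-- Adjacency in the 1-skeleton of S = (V,K): distinct vertices spanning an
edge of K. -/
def adjS {V : Type} [DecidableEq V] (K : Set (Finset V)) (u v : V) : Prop :=
  ({u, v} : Finset V) ∈ K ∧ u ≠ v

/-- Adjacency in the 1-skeleton of the covering complex Ŝ on V × (ℤ/2)^r
(conditions (U1),(U2)). -/
def covAdj {V : Type} [DecidableEq V] {r : ℕ} (K : Set (Finset V))
    (J : V → V → (Fin r → ZMod 2))
    (p q : V × (Fin r → ZMod 2)) : Prop :=
  adjS K p.1 q.1 ∧ p.2 + q.2 = J p.1 q.1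

/-!
A path in Ŝ projects to an edge path in S, and conversely an edge path from `a` lifts to Ŝ from any
starting label `g`; along the lift the label changes by `J` of each edge, so the endpoint label is
`g` plus the `J`-sum of the path. Translating labels by a fixed `c ∈ G` is an automorphism of Ŝ, so
the labels `h` with `(v, 0)` and `(v, h)` connected form a subgroup of `G`, the monodromy at `v`,
and it is generated by (indeed equal to) the set of `J`-sums of loops at `v`.
-/

section Covering

variable {V : Type} [DecidableEq V] {r : ℕ} {K : Set (Finset V)} {J : V → V → (Fin r → ZMod 2)}

instance adjS.instSymm : Std.Symm (adjS K) :=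
  ⟨fun u v h => ⟨Finset.pair_comm v u ▸ h.1, h.2.symm⟩⟩

lemma reflTransGen_adjS_of_covAdj {p q : V × (Fin r → ZMod 2)}
    (h : Relation.ReflTransGen (covAdj K J) p q) : Relation.ReflTransGen (adjS K) p.1 q.1 :=
  Relation.ReflTransGen.lift Prod.fst (fun _ _ hpq => hpq.1) _ _ h

lemma reflTransGen_covAdj_add_right (c : Fin r → ZMod 2) {p q : V × (Fin r → ZMod 2)}
    (h : Relation.ReflTransGen (covAdj K J) p q) :
    Relation.ReflTransGen (covAdj K J) (p.1, p.2 + c) (q.1, q.2 + c) :=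
  Relation.ReflTransGen.lift (fun p : V × (Fin r → ZMod 2) => (p.1, p.2 + c))
    (fun p q hpq => ⟨hpq.1, by
      change p.2 + c + (q.2 + c) = _
      rw [add_add_add_comm, ZModModule.add_self, add_zero, hpq.2]⟩) _ _ h

lemma exists_reflTransGen_covAdj_of_adjS {a b : V} (h : Relation.ReflTransGen (adjS K) a b)
    (g : Fin r → ZMod 2) : ∃ g', Relation.ReflTransGen (covAdj K J) (a, g) (b, g') := by
  induction h with
  | refl => exact ⟨g, .refl⟩
  | @tail b c _ hbc ih =>
    obtain ⟨g', hg'⟩ := ih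
    refine ⟨g' + J b c, hg'.tail ⟨hbc, ?_⟩⟩
    change g' + (g' + J b c) = J b c
    rw [← add_assoc, ZModModule.add_self, zero_add]

lemma reflTransGen_covAdj_of_edgePath (w : ℕ → V) (s : ℕ)
    (hw : ∀ i < s, adjS K (w i) (w (i + 1))) (g : Fin r → ZMod 2) :
    Relation.ReflTransGen (covAdj K J) (w 0, g)
      (w s, g + ∑ i ∈ Finset.range s, J (w i) (w (i + 1))) := by
  induction s with
  | zero => simpa using .refl
  | succ s ih =>
    refine (ih fun i hi => hw i (by omega)).tail ⟨hw s (by omega), ?_⟩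
    change g + _ + (g + ∑ i ∈ Finset.range (s + 1), J (w i) (w (i + 1))) = J (w s) (w (s + 1))
    rw [Finset.sum_range_succ, ← add_assoc g, ← add_assoc, ZModModule.add_self, zero_add]

lemma exists_edgePath_of_reflTransGen_covAdj {p q : V × (Fin r → ZMod 2)}
    (h : Relation.ReflTransGen (covAdj K J) p q) :
    ∃ (s : ℕ) (w : ℕ → V), w 0 = p.1 ∧ w s = q.1 ∧ (∀ i < s, adjS K (w i) (w (i + 1))) ∧
      p.2 + q.2 = ∑ i ∈ Finset.range s, J (w i) (w (i + 1)) := by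
  induction h using Relation.ReflTransGen.head_induction_on with
  | refl => exact ⟨0, fun _ => q.1, rfl, rfl, by simp, by simp [ZModModule.add_self]⟩
  | @head p b hpb _ ih =>
    obtain ⟨s, w, hw0, hws, hw, hsum⟩ := ih
    refine ⟨s + 1, fun | 0 => p.1 | i + 1 => w i, rfl, hws, ?_, ?_⟩
    · rintro (_ | i) hi
      · show adjS K p.1 (w 0)
        exact hw0 ▸ hpb.1
      · exact hw i (by omega)
    · rw [Finset.sum_range_succ', ← hsum]
      change p.2 + q.2 = b.2 + q.2 + J p.1 (w 0)
      rw [hw0, ← hpb.2, add_comm (b.2 + q.2), add_assoc, ← add_assoc b.2 b.2, ZModModule.add_self,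
        zero_add]

variable (K J) in
def monodromy (v : V) : AddSubgroup (Fin r → ZMod 2) where
  carrier := {h | Relation.ReflTransGen (covAdj K J) (v, 0) (v, h)}
  zero_mem' := .refl
  add_mem' {x y} hx hy := by
    have hy' := reflTransGen_covAdj_add_right x hy
    rw [zero_add, add_comm] at hy'
    exact hx.trans hy'
  neg_mem' {x} hx := by rwa [← ZModModule.neg_eq_self x] at hx

@[simp]
lemma mem_monodromy {v : V} {h : Fin r → ZMod 2} :
    h ∈ monodromy K J v ↔ Relation.ReflTransGen (covAdj K J) (v, 0) (v, h) :=
  Iff.rfl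

lemma reflTransGen_covAdj_iff_add_mem_monodromy (v : V) (g g' : Fin r → ZMod 2) :
    Relation.ReflTransGen (covAdj K J) (v, g) (v, g') ↔ g + g' ∈ monodromy K J v := by
  constructor
  · intro h
    simpa [ZModModule.add_self, add_comm g'] using reflTransGen_covAdj_add_right g h
  · intro h
    have h' := reflTransGen_covAdj_add_right g h
    rwa [zero_add, add_right_comm, ZModModule.add_self, zero_add] at h'

lemma monodromy_eq_closure (v : V) :
    monodromy K J v = AddSubgroup.closure {h : Fin r → ZMod 2 |
      ∃ (s : ℕ) (w : ℕ → V), w 0 = v ∧ w s = v ∧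
        (∀ i < s, adjS K (w i) (w (i + 1))) ∧
        h = ∑ i ∈ Finset.range s, J (w i) (w (i + 1))} := by
  refine le_antisymm (fun h hh => AddSubgroup.subset_closure ?_) ((AddSubgroup.closure_le _).2 ?_)
  · simpa using exists_edgePath_of_reflTransGen_covAdj hh
  · rintro _ ⟨s, w, hw0, hws, hw, rfl⟩
    simpa [hw0, hws] using reflTransGen_covAdj_of_edgePath w s hw 0

end Covering

theorem stmt_18_general
    (V : Type) [DecidableEq V] (r : ℕ)
    (K : Set (Finset V))
    (J : V → V → (Fin r → ZMod 2))
    (v0 : V) :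
    -- (1) the component of (v0, 0) covers all of S iff S is connected
    ((∀ v : V, ∃ g : Fin r → ZMod 2,
        Relation.ReflTransGen (covAdj K J) (v0, 0) (v, g)) ↔
      (∀ u v : V, Relation.ReflTransGen (adjS K) u v)) ∧
    -- (2) fibre components are governed by the subgroup of loop indices
    (∀ v : V, ∀ g g' : Fin r → ZMod 2,
      (Relation.ReflTransGen (covAdj K J) (v, g) (v, g') ↔
        g + g' ∈ AddSubgroup.closure {h : Fin r → ZMod 2 |
          ∃ (s : ℕ) (w : ℕ → V), w 0 = v ∧ w s = v ∧
            (∀ i < s, adjS K (w i) (w (i + 1))) ∧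
            h = ∑ i ∈ Finset.range s, J (w i) (w (i + 1))})) := by
  refine ⟨⟨fun hcov u v => ?_, fun hconn v => exists_reflTransGen_covAdj_of_adjS (hconn v0 v) 0⟩,
    fun v g g' => by rw [reflTransGen_covAdj_iff_add_mem_monodromy, monodromy_eq_closure]⟩
  obtain ⟨gu, hu⟩ := hcov u
  obtain ⟨gv, hv⟩ := hcov v
  exact (Std.Symm.symm _ _ (reflTransGen_adjS_of_covAdj hu)).trans (reflTransGen_adjS_of_covAdj hv)

theorem stmt_18
    (V : Type) [DecidableEq V] (r : ℕ)
    (K : Set (Finset V))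
    (hdown : ∀ s ∈ K, ∀ t ⊆ s, t ∈ K)
    (J : V → V → (Fin r → ZMod 2))
    (hsymm : ∀ a b, J a b = J b a)
    (hdiag : ∀ a, J a a = 0)
    (hcoc : ∀ a b c : V, ({a, b, c} : Finset V) ∈ K → J a b + J b c + J a c = 0)
    (v0 : V) :
    -- (1) the component of (v0, 0) covers all of S iff S is connected
    ((∀ v : V, ∃ g : Fin r → ZMod 2,
        Relation.ReflTransGen (covAdj K J) (v0, 0) (v, g)) ↔
      (∀ u v : V, Relation.ReflTransGen (adjS K) u v)) ∧
    -- (2) fibre components are governed by the subgroup of loop indices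
    (∀ v : V, ∀ g g' : Fin r → ZMod 2,
      (Relation.ReflTransGen (covAdj K J) (v, g) (v, g') ↔
        g + g' ∈ AddSubgroup.closure {h : Fin r → ZMod 2 |
          ∃ (s : ℕ) (w : ℕ → V), w 0 = v ∧ w s = v ∧
            (∀ i < s, adjS K (w i) (w (i + 1))) ∧
            h = ∑ i ∈ Finset.range s, J (w i) (w (i + 1))})) :=
  stmt_18_general V r K J v0
end
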